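/- For every n ≥ 1 and every τ ∈ S_n, ∑_{g∈S_n} d̃es(g)·d̃es(g⁻¹τ) = −(n−1)!·d̃es(τ), where d̃es(σ) = des(σ) − (n−1)/2. In particular, −d̃es/(n−1)! is an idempotent under convolution in ℚ[S_n]. -/

import Mathlib

def descents (n : ℕ) (σ : Equiv.Perm (Fin n)) : Finset (Fin (n - 1)) :=
  Finset.univ.filter fun i =>
    σ ⟨i.1 + 1, by have := i.isLt; omega⟩ < σ ⟨i.1, by have := i.isLt; omega⟩

def desStat (n : ℕ) (σ : Equiv.Perm (Fin n)) : ℕ := (descents n σ).card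

def majStat (n : ℕ) (σ : Equiv.Perm (Fin n)) : ℕ := ∑ i ∈ descents n σ, (i.1 + 1)

def invStat (n : ℕ) (σ : Equiv.Perm (Fin n)) : ℕ :=
  (Finset.univ.filter fun p : Fin n × Fin n => p.1 < p.2 ∧ σ p.2 < σ p.1).card

def fixStat (n : ℕ) (σ : Equiv.Perm (Fin n)) : ℕ :=
  (Finset.univ.filter fun i : Fin n => σ i = i).card

noncomputable def majC (n : ℕ) (σ : Equiv.Perm (Fin n)) : ℚ :=
  (majStat n σ : ℚ) - n * (n - 1) / 4

noncomputable def desC (n : ℕ) (σ : Equiv.Perm (Fin n)) : ℚ :=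
  (desStat n σ : ℚ) - (n - 1) / 2

noncomputable def invC (n : ℕ) (σ : Equiv.Perm (Fin n)) : ℚ :=
  (invStat n σ : ℚ) - n * (n - 1) / 4


/-!
Write `d̃es σ = ½ ∑ᵢ ε_{i,i+1}(σ)`, where `ε_{x,y}(σ)` is `1` if `σ y < σ x` and `-1` otherwise.
For adjacent positions `a ⋖ b` and distinct values `s, t`, pair each `g` with `g * (a b)`: this
flips the sign of `ε_{a,b}(g)`, and since an adjacent transposition preserves the relative
order of every other pair, it leaves `ε_{s,t}(g⁻¹)` unchanged unless `g` maps `{a, b}` onto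
`{s, t}`. The `2 (n-2)!` such permutations give
`∑_g ε_{a,b}(g) ε_{s,t}(g⁻¹) = -2 (n-2)! ε_{s,t}(1)`, and summing over the `n - 1` positions `a`
gives `-(n-1)! d̃es τ`.
-/

open Finset Equiv
open scoped Nat

namespace Equiv.Perm

variable {α : Type*} [Fintype α] [DecidableEq α]

theorem card_filter_apply_eq_self_and_apply_eq_self {a b : α} (hab : a ≠ b) :
    #{g : Perm α | g a = a ∧ g b = b} = (Fintype.card α - 2)! := by
  let p : α → Prop := (· ∉ ({a, b} : Finset α))
  have hfix : {g : Perm α // g a = a ∧ g b = b} ≃ {g : Perm α // ∀ x, ¬p x → g x = x} :=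
    subtypeEquivRight fun g => by
      simp only [p, not_not, mem_insert, mem_singleton, forall_eq_or_imp, forall_eq]
  rw [← Fintype.card_subtype,
    Fintype.card_congr (hfix.trans (Perm.subtypeEquivSubtypePerm p).symm), Fintype.card_perm,
    Fintype.card_subtype_compl, Fintype.card_coe, card_pair hab]

theorem card_filter_apply_eq_and_apply_eq {a b s t : α} (hab : a ≠ b) (hst : s ≠ t) :
    #{g : Perm α | g a = s ∧ g b = t} = (Fintype.card α - 2)! := by
  obtain ⟨g₀, hg₀⟩ := exists_extending_pair ![a, b] ![s, t]
    (by simp [Function.Injective, Fin.forall_fin_two, hab, hab.symm])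
    (by simp [Function.Injective, Fin.forall_fin_two, hst, hst.symm])
  have ha : g₀ a = s := hg₀ 0
  have hb : g₀ b = t := hg₀ 1
  rw [← card_filter_apply_eq_self_and_apply_eq_self hab]
  refine card_equiv (Equiv.mulLeft g₀⁻¹) fun g => ?_
  simp only [mem_filter, mem_univ, true_and, coe_mulLeft, Perm.mul_apply, Perm.inv_eq_iff_eq,
    ha, hb]

end Equiv.Perm

section InversionSign

variable {α : Type*} [LinearOrder α]

def inversionSign (x y : α) (σ : Perm α) : ℚ := if σ y < σ x then 1 else -1

lemma inversionSign_mul_swap {a b : α} (hab : a ≠ b) (g : Perm α) :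
    inversionSign a b (g * swap a b) = -inversionSign a b g := by
  rcases (g.injective.ne hab).lt_or_gt with h | h <;> simp [inversionSign, h, h.not_gt]

lemma swap_lt_swap_iff_of_covBy {a b x y : α} (hab : a ⋖ b) (hxy : x ≠ y)
    (h : ¬((x = a ∧ y = b) ∨ (x = b ∧ y = a))) :
    swap a b y < swap a b x ↔ y < x := by
  have lt_a_iff : ∀ z, z ≠ a → (z < a ↔ z < b) := fun z hz =>
    ⟨fun h => h.trans hab.lt, fun h => (hab.le_of_lt h).lt_of_ne hz⟩
  have a_lt_iff : ∀ z, z ≠ b → (a < z ↔ b < z) := fun z hz =>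
    ⟨fun h => (hab.ge_of_gt h).lt_of_ne' hz, fun h => hab.lt.trans h⟩
  by_cases hxa : x = a <;> by_cases hxb : x = b <;> by_cases hya : y = a <;>
    by_cases hyb : y = b <;> simp_all [swap_apply_of_ne_of_ne]

lemma inversionSign_mul_sub_inversionSign_swap_mul {a b : α} (hab : a ⋖ b) {s t : α}
    (hst : s ≠ t) (g : Perm α) :
    inversionSign a b g * (inversionSign s t g⁻¹ - inversionSign s t (swap a b * g⁻¹)) =
      if (g a = s ∧ g b = t) ∨ (g a = t ∧ g b = s) then -2 * inversionSign s t 1 else 0 := by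
  by_cases hmaps : (g a = s ∧ g b = t) ∨ (g a = t ∧ g b = s)
  · rcases hmaps with ⟨rfl, rfl⟩ | ⟨rfl, rfl⟩ <;> rcases hst.lt_or_gt with h | h <;>
      norm_num [inversionSign, hab.lt, hab.lt.not_gt, h, h.not_gt]
  have hpreserved : swap a b (g⁻¹ t) < swap a b (g⁻¹ s) ↔ g⁻¹ t < g⁻¹ s := by
    refine swap_lt_swap_iff_of_covBy hab (g⁻¹.injective.ne hst) ?_
    simp only [Perm.inv_eq_iff_eq]
    tauto
  simp only [inversionSign, Perm.mul_apply, hpreserved, sub_self, mul_zero, if_neg hmaps]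

theorem sum_inversionSign_mul_inversionSign_inv [Fintype α] {a b : α} (hab : a ⋖ b) {s t : α}
    (hst : s ≠ t) :
    ∑ g : Perm α, inversionSign a b g * inversionSign s t g⁻¹ =
      -(2 * (Fintype.card α - 2)! : ℚ) * inversionSign s t 1 := by
  set F : Perm α → ℚ := fun g => inversionSign a b g * inversionSign s t g⁻¹
  have hreindex : ∑ g, F g = ∑ g, F (g * swap a b) :=
    (Equiv.sum_comp (Equiv.mulRight (swap a b)) F).symm
  have hpair : ∀ g, F g + F (g * swap a b) =
      inversionSign a b g * (inversionSign s t g⁻¹ - inversionSign s t (swap a b * g⁻¹)) := by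
    intro g
    simp only [F, inversionSign_mul_swap hab.ne, mul_inv_rev, swap_inv]
    ring
  have hcard : #{g : Perm α | (g a = s ∧ g b = t) ∨ (g a = t ∧ g b = s)} =
      2 * (Fintype.card α - 2)! := by
    rw [filter_or, card_union_of_disjoint, Perm.card_filter_apply_eq_and_apply_eq hab.ne hst,
      Perm.card_filter_apply_eq_and_apply_eq hab.ne hst.symm, two_mul]
    exact disjoint_filter.2 fun g _ h h' => hst (h.1.symm.trans h'.1)
  have htwice :
      2 * ∑ g, F g = 2 * (-(2 * (Fintype.card α - 2)! : ℚ) * inversionSign s t 1) := by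
    calc 2 * ∑ g, F g = ∑ g, (F g + F (g * swap a b)) := by
          rw [two_mul, sum_add_distrib, ← hreindex]
      _ = _ := by
          simp only [hpair, inversionSign_mul_sub_inversionSign_swap_mul hab hst, sum_ite,
            sum_const_zero, add_zero, sum_const, nsmul_eq_mul, hcard]
          push_cast
          ring
  exact mul_left_cancel₀ two_ne_zero htwice

end InversionSign

noncomputable def descentSign (n : ℕ) (i : Fin (n - 1)) (σ : Perm (Fin n)) : ℚ :=
  inversionSign ⟨i, by omega⟩ ⟨i + 1, by omega⟩ σ

lemma desC_eq_sum_descentSign_div_two {n : ℕ} (hn : 1 ≤ n) (σ : Perm (Fin n)) :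
    desC n σ = (∑ i, descentSign n i σ) / 2 := by
  have hsign : ∀ i, descentSign n i σ = 2 * (if i ∈ descents n σ then 1 else 0) - 1 := by
    intro i
    simp only [descentSign, inversionSign, descents, mem_filter, mem_univ, true_and]
    split_ifs <;> norm_num
  simp only [hsign, sum_sub_distrib, ← mul_sum, sum_boole, sum_const, card_univ,
    Fintype.card_fin, filter_mem_eq_inter, univ_inter, nsmul_eq_mul, mul_one, desC, desStat,
    Nat.cast_sub hn]
  ring

lemma sum_descentSign_mul_descentSign_inv_mul {n : ℕ} (i j : Fin (n - 1)) (τ : Perm (Fin n)) :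
    ∑ g, descentSign n i g * descentSign n j (g⁻¹ * τ) =
      -(2 * (n - 2)! : ℚ) * descentSign n j τ := by
  have hcov : (⟨i, by omega⟩ : Fin n) ⋖ ⟨i + 1, by omega⟩ := by simp [Fin.covBy_iff]
  have hne : τ ⟨j, by omega⟩ ≠ τ ⟨j + 1, by omega⟩ := τ.injective.ne (by simp [Fin.ext_iff])
  have key := sum_inversionSign_mul_inversionSign_inv hcov hne
  rwa [Fintype.card_fin] at key

lemma sum_sum_descentSign_mul_descentSign_inv_mul {n : ℕ} (j : Fin (n - 1)) (τ : Perm (Fin n)) :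
    ∑ i, ∑ g, descentSign n i g * descentSign n j (g⁻¹ * τ) =
      -(2 * (n - 1)! : ℚ) * descentSign n j τ := by
  have hfact : ((n - 1 : ℕ) : ℚ) * (n - 2)! = (n - 1)! := by
    rw [show n - 2 = n - 1 - 1 by omega]
    exact_mod_cast Nat.mul_factorial_pred (by have := j.isLt; omega)
  simp only [sum_descentSign_mul_descentSign_inv_mul, sum_const, card_univ, Fintype.card_fin,
    nsmul_eq_mul, ← hfact]
  ring

theorem sum_desC_mul_desC_inv_mul {n : ℕ} (hn : 1 ≤ n) (τ : Perm (Fin n)) :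
    ∑ g, desC n g * desC n (g⁻¹ * τ) = -((n - 1)! : ℚ) * desC n τ := by
  simp only [desC_eq_sum_descentSign_div_two hn]
  calc ∑ g, (∑ i, descentSign n i g) / 2 * ((∑ j, descentSign n j (g⁻¹ * τ)) / 2)
      = (∑ j, ∑ i, ∑ g, descentSign n i g * descentSign n j (g⁻¹ * τ)) / 4 := by
        simp only [div_mul_div_comm, sum_mul_sum, ← sum_div]
        rw [sum_comm, sum_comm_cycle]
        norm_num
    _ = _ := by
        simp only [sum_sum_descentSign_mul_descentSign_inv_mul, ← mul_sum]
        ring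

theorem des_conv_des (n : ℕ) (hn : 1 ≤ n) :
    (∀ τ : Equiv.Perm (Fin n),
      ∑ g : Equiv.Perm (Fin n), desC n g * desC n (g⁻¹ * τ) =
        -((n - 1).factorial : ℚ) * desC n τ) ∧
    (∀ τ : Equiv.Perm (Fin n),
      ∑ g : Equiv.Perm (Fin n),
          (-(desC n g / ((n - 1).factorial : ℚ))) * (-(desC n (g⁻¹ * τ) / ((n - 1).factorial : ℚ))) =
        -(desC n τ / ((n - 1).factorial : ℚ))) := by
  refine ⟨sum_desC_mul_desC_inv_mul hn, fun τ => ?_⟩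
  have hfact : ((n - 1).factorial : ℚ) ≠ 0 := by positivity
  simp only [neg_mul_neg, div_mul_div_comm, ← sum_div, sum_desC_mul_desC_inv_mul hn]
  field_simp
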